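/- Let p be an odd prime, let M = [[A',B'],[C',D']] ∈ Sp₄(ℤ) and let M' ∈ Γ(2,4) be such that N := M·M' lies in Γ₀(p). Write N = [[A,B],[C,D]] in 2×2 blocks, so that C = p·C₀ for an integer matrix C₀, and set N_p := [[A, pB],[C₀, D]]. Then N_p ∈ Sp₄(ℤ). Moreover, N_p and M lie in the same class modulo Γ(2,4) (i.e. N_p·M⁻¹ ∈ Γ(2,4)) whenever p ≡ 1 (mod 4); and when p ≡ 3 (mod 4) the same conclusion holds provided all diagonal entries of A'·ᵗB' and all diagonal entries of C'·ᵗD' are even. -/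

import Mathlib

open Matrix

/-- The standard symplectic form matrix `J = [[0, I₂], [-I₂, 0]]` in `2 × 2` blocks. -/
def Jmat : Matrix (Fin 2 ⊕ Fin 2) (Fin 2 ⊕ Fin 2) ℤ :=
  Matrix.fromBlocks 0 1 (-1) 0

/-- A `4 × 4` integer matrix is symplectic (lies in `Sp₄(ℤ)`) if `ᵗγ ⬝ J ⬝ γ = J`. -/
def IsSymplectic (γ : Matrix (Fin 2 ⊕ Fin 2) (Fin 2 ⊕ Fin 2) ℤ) : Prop :=
  γᵀ * Jmat * γ = Jmat

/-- Membership in `Γ(2,4)`: a symplectic matrix congruent to `I₄` mod `2` whose `B` and `C`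
blocks have all diagonal entries divisible by `4`. -/
def InGamma24 (M : Matrix (Fin 2 ⊕ Fin 2) (Fin 2 ⊕ Fin 2) ℤ) : Prop :=
  IsSymplectic M ∧
  (∀ i j, (2 : ℤ) ∣ (M i j - (1 : Matrix (Fin 2 ⊕ Fin 2) (Fin 2 ⊕ Fin 2) ℤ) i j)) ∧
  (∀ i : Fin 2, (4 : ℤ) ∣ M (Sum.inl i) (Sum.inr i)) ∧
  (∀ i : Fin 2, (4 : ℤ) ∣ M (Sum.inr i) (Sum.inl i))

/-- Membership in `Γ₀(p)`: a symplectic matrix whose `C` block is `≡ 0 mod p`. -/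
def InGamma0 (p : ℕ) (M : Matrix (Fin 2 ⊕ Fin 2) (Fin 2 ⊕ Fin 2) ℤ) : Prop :=
  IsSymplectic M ∧ ∀ i j : Fin 2, (p : ℤ) ∣ M (Sum.inr i) (Sum.inl j)

/-
Write an element of `Γ(2)` as `1 + 2X`. Symplecticity makes `JX` symmetric modulo 2, and the extra
condition defining `Γ(2,4)` says that the diagonal of `JX`, which collects the diagonals of the two
off-diagonal blocks of `X`, is even: the quadratic form `v ↦ vᵀ(JX)v` vanishes modulo 2.
Conjugation by `g ∈ Sp₄(ℤ)` replaces `JX` by the congruent matrix `(g⁻¹)ᵀ(JX)g⁻¹`, so `Γ(2,4)` is a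
normal subgroup of `Sp₄(ℤ)`.

`N_p` is symplectic because the block relations of `N = [[A, B], [pC₀, D]]` are those of `N_p`
multiplied by `p`. Then `N_p M⁻¹ = (N_p N⁻¹)(M M' M⁻¹)`, where the second factor lies in `Γ(2,4)`
by normality, and `N_p N⁻¹ = 1 + (p - 1)[[0, B], [-C₀, 0]]N⁻¹` has off-diagonal blocks whose
diagonals are `(p - 1)·diag(BᵗA)` and `-(p - 1)·diag(C₀ᵗD)`. These are divisible by 4 when
`p ≡ 1 (mod 4)`; when `p ≡ 3 (mod 4)` one uses `N ≡ M (mod 2)`, i.e. `A ≡ A'`, `B ≡ B'`,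
`C₀ ≡ C'` and `D ≡ D'`.
-/

theorem Matrix.IsSymm.dotProduct_mulVec_self_eq_zero {n R : Type*} [Fintype n] [CommRing R]
    [CharP R 2] {S : Matrix n n R} (hS : S.IsSymm) (hdiag : S.diag = 0) (v : n → R) :
    v ⬝ᵥ S *ᵥ v = 0 := by
  have hsum : v ⬝ᵥ S *ᵥ v = ∑ ij : n × n, v ij.1 * S ij.1 ij.2 * v ij.2 := by
    simp [dotProduct, mulVec, Finset.mul_sum, Fintype.sum_prod_type, mul_assoc]
  rw [hsum]
  refine Finset.sum_involution (fun ij _ => ij.swap) (fun ⟨i, j⟩ _ => ?_) (fun ⟨i, j⟩ _ h => ?_)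
    (by simp) (by simp)
  · simp only [Prod.swap_prod_mk, hS.apply i j]
    rw [show v j * S i j * v i = v i * S i j * v j by ring]
    exact CharTwo.add_self_eq_zero (R := R) _
  · intro hij
    obtain rfl : j = i := congrArg Prod.fst hij
    simp [show S j j = 0 from congrFun hdiag j] at h

theorem Matrix.IsSymm.diag_transpose_mul_mul_self_eq_zero {m n R : Type*} [Fintype n] [CommRing R]
    [CharP R 2] {S : Matrix n n R} (hS : S.IsSymm) (hdiag : S.diag = 0) (U : Matrix n m R) :
    (Uᵀ * S * U).diag = 0 := by
  ext i
  rw [diag_apply, Pi.zero_apply, ← hS.dotProduct_mulVec_self_eq_zero hdiag (fun k => U k i)]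
  simp only [mul_apply, transpose_apply, Finset.sum_mul, mul_assoc, dotProduct, mulVec,
    Finset.mul_sum]
  rw [Finset.sum_comm]

theorem two_dvd_transpose_mul_mul_apply_self {m n : Type*} [Fintype n] {S : Matrix n n ℤ}
    (hS : ∀ i j, 2 ∣ S i j - S j i) (hdiag : ∀ i, 2 ∣ S i i) (U : Matrix n m ℤ) (i : m) :
    2 ∣ (Uᵀ * S * U) i i := by
  set f := Int.castRingHom (ZMod 2)
  have hsymm : (S.map f).IsSymm := by
    ext i j
    exact (ZMod.intCast_eq_intCast_iff_dvd_sub _ _ 2).2 (hS i j)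
  have hzero : (S.map f).diag = 0 := by
    ext i
    exact (ZMod.intCast_zmod_eq_zero_iff_dvd _ 2).2 (hdiag i)
  have h := congrFun (hsymm.diag_transpose_mul_mul_self_eq_zero hzero (U.map f)) i
  rw [← transpose_map, ← Matrix.map_mul, ← Matrix.map_mul] at h
  exact (ZMod.intCast_zmod_eq_zero_iff_dvd _ 2).1 h

theorem map_mul_eq_of_two_dvd_sub_one {n : Type*} [Fintype n] [DecidableEq n]
    {M M' : Matrix n n ℤ} (h : ∀ i j, 2 ∣ M' i j - (1 : Matrix n n ℤ) i j) :
    (M * M').map (Int.castRingHom (ZMod 2)) = M.map (Int.castRingHom (ZMod 2)) := by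
  have hM' : M'.map (Int.castRingHom (ZMod 2)) = 1 := by
    rw [← Matrix.map_one (Int.castRingHom (ZMod 2)) (map_zero _) (map_one _)]
    ext i j
    exact (ZMod.intCast_eq_intCast_iff_dvd_sub _ _ 2).2 (dvd_sub_comm.1 (h i j))
  rw [Matrix.map_mul, hM', Matrix.mul_one]

theorem two_dvd_mul_transpose_apply_iff {m n : Type*} [Fintype n] {P P' Q Q' : Matrix m n ℤ}
    (hP : P.map (Int.castRingHom (ZMod 2)) = P'.map (Int.castRingHom (ZMod 2)))
    (hQ : Q.map (Int.castRingHom (ZMod 2)) = Q'.map (Int.castRingHom (ZMod 2))) (i j : m) :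
    2 ∣ (P * Qᵀ) i j ↔ 2 ∣ (P' * Q'ᵀ) i j := by
  have hmap :
      (P * Qᵀ).map (Int.castRingHom (ZMod 2)) = (P' * Q'ᵀ).map (Int.castRingHom (ZMod 2)) := by
    simp only [Matrix.map_mul, transpose_map, hP, hQ]
  have hij : (((P * Qᵀ) i j : ℤ) : ZMod 2) = (P' * Q'ᵀ) i j := congrFun₂ hmap i j
  rw [← even_iff_two_dvd, ← even_iff_two_dvd, ← ZMod.intCast_eq_zero_iff_even,
    ← ZMod.intCast_eq_zero_iff_even, hij]

theorem SymplecticGroup.coe_inv_fromBlocks {l R : Type*} [DecidableEq l] [Fintype l] [CommRing R]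
    {A B C D : Matrix l l R} (g : symplecticGroup l R) (hg : ↑g = fromBlocks A B C D) :
    ↑g⁻¹ = fromBlocks Dᵀ (-Bᵀ) (-Cᵀ) Aᵀ := by
  rw [SymplecticGroup.coe_inv, hg, J]
  simp [fromBlocks_transpose, fromBlocks_multiply, fromBlocks_neg]

theorem SymplecticGroup.coe_mul_coe_inv {l R : Type*} [DecidableEq l] [Fintype l] [CommRing R]
    (g : symplecticGroup l R) : (g : Matrix (l ⊕ l) (l ⊕ l) R) * (g⁻¹ : symplecticGroup l R) = 1 :=
  congrArg Subtype.val (mul_inv_cancel g)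

theorem SymplecticGroup.coe_inv_mul_coe {l R : Type*} [DecidableEq l] [Fintype l] [CommRing R]
    (g : symplecticGroup l R) : (↑g⁻¹ : Matrix (l ⊕ l) (l ⊕ l) R) * g = 1 :=
  congrArg Subtype.val (inv_mul_cancel g)

theorem SymplecticGroup.fromBlocks_smul₁₂_mem_of_smul₂₁_mem {l R : Type*} [DecidableEq l]
    [Fintype l] [CommRing R] [IsDomain R] {A B C D : Matrix l l R} {c : R} (hc : c ≠ 0)
    (h : fromBlocks A B (c • C) D ∈ symplecticGroup l R) :
    fromBlocks A (c • B) C D ∈ symplecticGroup l R := by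
  rw [SymplecticGroup.fromBlocks_mem_iff] at h ⊢
  obtain ⟨hAC, hBD, hAD⟩ := h
  refine ⟨?_, by simp [hBD], by simpa using hAD⟩
  ext i j
  simpa [hc] using congrFun₂ hAC i j

local notation "Mat₄" => Matrix (Fin 2 ⊕ Fin 2) (Fin 2 ⊕ Fin 2) ℤ

local notation "Sp₄ℤ" => symplecticGroup (Fin 2) ℤ

theorem J_eq_neg_Jmat : J (Fin 2) ℤ = -Jmat := by
  simp [Jmat, J, fromBlocks_neg]

theorem isSymplectic_iff_mem_symplecticGroup {γ : Mat₄} :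
    IsSymplectic γ ↔ γ ∈ Sp₄ℤ := by
  rw [SymplecticGroup.mem_iff', IsSymplectic, J_eq_neg_Jmat, Matrix.mul_neg, Matrix.neg_mul,
    neg_inj]

theorem Jmat_transpose : Jmatᵀ = -Jmat := by
  simp [Jmat, fromBlocks_transpose, fromBlocks_neg]

theorem Jmat_mul_self : Jmat * Jmat = -1 := by
  rw [← neg_mul_neg, ← J_eq_neg_Jmat, J_squared]

theorem Jmat_mul_apply_inl (X : Mat₄) (i : Fin 2) (k) :
    (Jmat * X) (Sum.inl i) k = X (Sum.inr i) k := by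
  simp [Jmat, Matrix.mul_apply, Fintype.sum_sum_type, one_apply]

theorem Jmat_mul_apply_inr (X : Mat₄) (i : Fin 2) (k) :
    (Jmat * X) (Sum.inr i) k = -X (Sum.inl i) k := by
  simp [Jmat, Matrix.mul_apply, Fintype.sum_sum_type, one_apply]

theorem transpose_mul_Jmat_apply (X : Mat₄) (i j) :
    (Xᵀ * Jmat) i j = -(Jmat * X) j i := by
  rw [← transpose_apply (Jmat * X), transpose_mul, Jmat_transpose, mul_neg, Matrix.neg_apply,
    neg_neg]

theorem two_dvd_Jmat_mul_sub_of_isSymplectic {X : Mat₄}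
    (h : IsSymplectic (1 + (2 : ℤ) • X)) (i j) :
    2 ∣ (Jmat * X) i j - (Jmat * X) j i := by
  have hexp : (1 + (2 : ℤ) • X)ᵀ * Jmat * (1 + (2 : ℤ) • X)
      = Jmat + (2 : ℤ) • (Xᵀ * Jmat + Jmat * X + (2 : ℤ) • (Xᵀ * Jmat * X)) := by
    rw [transpose_add, transpose_smul, transpose_one]
    simp only [add_mul, mul_add, Matrix.smul_mul, Matrix.mul_smul, one_mul, mul_one]
    module
  have hij := congrFun₂ (hexp.symm.trans h) i j
  simp only [Matrix.add_apply, Matrix.smul_apply, smul_eq_mul, transpose_mul_Jmat_apply] at hij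
  exact ⟨-(Xᵀ * Jmat * X) i j, by linarith⟩

theorem inGamma24_iff {γ : Mat₄} :
    InGamma24 γ ↔ IsSymplectic γ ∧ ∃ X, γ = 1 + (2 : ℤ) • X ∧ ∀ i, 2 ∣ (Jmat * X) i i := by
  constructor
  · rintro ⟨hγ, h2, hB, hC⟩
    refine ⟨hγ, of fun i j => (γ i j - (1 : Matrix _ _ ℤ) i j) / 2, ?_, ?_⟩
    · ext i j
      have := h2 i j
      simp only [Matrix.add_apply, Matrix.smul_apply, of_apply, smul_eq_mul]
      omega
    · rintro (i | i)
      · have := hC i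
        simp only [Jmat_mul_apply_inl, of_apply, one_apply_ne Sum.inr_ne_inl]
        omega
      · have := hB i
        simp only [Jmat_mul_apply_inr, of_apply, one_apply_ne Sum.inl_ne_inr]
        omega
  · rintro ⟨hγ, X, rfl, hX⟩
    refine ⟨hγ, fun i j => ⟨X i j, ?_⟩, fun i => ?_, fun i => ?_⟩
    · simp only [Matrix.add_apply, Matrix.smul_apply, smul_eq_mul, add_sub_cancel_left]
    · have := hX (Sum.inr i)
      simp only [Jmat_mul_apply_inr, Matrix.add_apply, Matrix.smul_apply,
        smul_eq_mul, one_apply_ne Sum.inl_ne_inr] at this ⊢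
      omega
    · have := hX (Sum.inl i)
      simp only [Jmat_mul_apply_inl, Matrix.add_apply, Matrix.smul_apply,
        smul_eq_mul, one_apply_ne Sum.inr_ne_inl] at this ⊢
      omega

theorem InGamma24.mul {K L : Mat₄} (hK : InGamma24 K) (hL : InGamma24 L) :
    InGamma24 (K * L) := by
  obtain ⟨hKs, X, rfl, hX⟩ := inGamma24_iff.1 hK
  obtain ⟨hLs, Y, rfl, hY⟩ := inGamma24_iff.1 hL
  have hKL := mul_mem (isSymplectic_iff_mem_symplecticGroup.1 hKs)
    (isSymplectic_iff_mem_symplecticGroup.1 hLs)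
  refine inGamma24_iff.2 ⟨isSymplectic_iff_mem_symplecticGroup.2 hKL,
    X + Y + (2 : ℤ) • (X * Y), ?_, fun i => ?_⟩
  · simp only [add_mul, mul_add, Matrix.smul_mul, Matrix.mul_smul, one_mul, mul_one]
    module
  · rw [mul_add, mul_add, Matrix.mul_smul, Matrix.add_apply, Matrix.add_apply, Matrix.smul_apply,
      smul_eq_mul]
    exact dvd_add (dvd_add (hX i) (hY i)) (dvd_mul_right _ _)

theorem InGamma24.inv {g : Sp₄ℤ} (hg : InGamma24 g) : InGamma24 ((g⁻¹ : Sp₄ℤ) : Mat₄) := by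
  obtain ⟨-, X, hX, hXdiag⟩ := inGamma24_iff.1 hg
  refine inGamma24_iff.2 ⟨isSymplectic_iff_mem_symplecticGroup.2 g⁻¹.2,
    -(Jmat * Xᵀ * Jmat), ?_, fun i => ?_⟩
  · rw [SymplecticGroup.coe_inv, hX, J_eq_neg_Jmat, neg_neg, transpose_add, transpose_smul,
      transpose_one]
    simp only [add_mul, mul_add, Matrix.smul_mul, Matrix.mul_smul, Matrix.mul_neg, mul_one,
      Jmat_mul_self]
    module
  · rw [mul_neg, ← Matrix.mul_assoc, ← Matrix.mul_assoc, Jmat_mul_self, neg_one_mul,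
      Matrix.neg_mul, neg_neg, transpose_mul_Jmat_apply, dvd_neg]
    exact hXdiag i

theorem InGamma24.conj {k : Sp₄ℤ} (hk : InGamma24 k) (g : Sp₄ℤ) : InGamma24 ↑(g * k * g⁻¹) := by
  obtain ⟨hks, X, hX, hXdiag⟩ := inGamma24_iff.1 hk
  set G : Mat₄ := ↑g
  set H : Mat₄ := ↑g⁻¹
  have hHG : H * G = 1 := SymplecticGroup.coe_inv_mul_coe g
  have hH : Hᵀ * Jmat * H = Jmat := isSymplectic_iff_mem_symplecticGroup.2 g⁻¹.2
  have hconj : Jmat * (G * X * H) = Hᵀ * (Jmat * X) * H := by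
    calc Jmat * (G * X * H) = Hᵀ * Jmat * H * G * X * H := by
          simp only [hH, Matrix.mul_assoc]
      _ = Hᵀ * (Jmat * X) * H := by
          rw [Matrix.mul_assoc _ H, hHG]
          simp only [Matrix.mul_one, Matrix.mul_assoc]
  refine inGamma24_iff.2 ⟨isSymplectic_iff_mem_symplecticGroup.2 (g * k * g⁻¹).2,
    G * X * H, ?_, fun i => ?_⟩
  · rw [Submonoid.coe_mul, Submonoid.coe_mul, hX, mul_add, add_mul, Matrix.mul_one,
      SymplecticGroup.coe_mul_coe_inv, Matrix.mul_smul, Matrix.smul_mul]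
  · rw [hconj]
    exact two_dvd_transpose_mul_mul_apply_self
      (two_dvd_Jmat_mul_sub_of_isSymplectic (hX ▸ hks)) hXdiag _ i

def gamma24 : Subgroup Sp₄ℤ where
  carrier := {g | InGamma24 g}
  one_mem' := inGamma24_iff.2 ⟨isSymplectic_iff_mem_symplecticGroup.2 (one_mem _), 0,
    by rw [smul_zero, add_zero]; rfl, by simp⟩
  mul_mem' := InGamma24.mul
  inv_mem' := InGamma24.inv

instance gamma24_normal : gamma24.Normal :=
  ⟨fun _ hk g => hk.conj g⟩

theorem rescale_mul_inv_mem_gamma24 {q : ℤ} (hq : Odd q) {A B C₀ D : Matrix (Fin 2) (Fin 2) ℤ}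
    {n n' : Sp₄ℤ} (hn : (n : Mat₄) = fromBlocks A B (q • C₀) D)
    (hn' : (n' : Mat₄) = fromBlocks A (q • B) C₀ D)
    (hAB : ∀ i, 4 ∣ (q - 1) * (A * Bᵀ) i i) (hCD : ∀ i, 4 ∣ (q - 1) * (C₀ * Dᵀ) i i) :
    n' * n⁻¹ ∈ gamma24 := by
  obtain ⟨k, rfl⟩ := hq
  set E : Mat₄ := fromBlocks 0 (k • B) (-(k • C₀)) 0
  set Ninv : Mat₄ := ↑n⁻¹
  have hsplit : (n' : Mat₄) = n + (2 : ℤ) • E := by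
    rw [hn, hn', fromBlocks_smul, fromBlocks_add, fromBlocks_inj]
    refine ⟨by simp, by module, by module, by simp⟩
  have hinv : Ninv = _ := SymplecticGroup.coe_inv_fromBlocks n hn
  refine inGamma24_iff.2 ⟨isSymplectic_iff_mem_symplecticGroup.2 (n' * n⁻¹).2, E * Ninv, ?_, ?_⟩
  · rw [Submonoid.coe_mul, hsplit, add_mul, SymplecticGroup.coe_mul_coe_inv, Matrix.smul_mul]
  · have hdiag : ∀ x : ℤ, 4 ∣ (2 * k + 1 - 1) * x → 2 ∣ k * x := fun x hx => by
      rw [show (2 * k + 1 - 1) * x = 2 * (k * x) by ring] at hx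
      omega
    rintro (i | i)
    · simp only [Jmat_mul_apply_inl, E, hinv, fromBlocks_multiply, fromBlocks_apply₂₁,
        Matrix.zero_mul, add_zero, Matrix.neg_mul, Matrix.smul_mul, Matrix.neg_apply,
        Matrix.smul_apply, smul_eq_mul, dvd_neg]
      exact hdiag _ (hCD i)
    · have hBA : (B * Aᵀ) i i = (A * Bᵀ) i i := by
        rw [← transpose_apply (A * Bᵀ), transpose_mul, transpose_transpose]
      simp only [Jmat_mul_apply_inr, E, hinv, fromBlocks_multiply, fromBlocks_apply₁₂,
        Matrix.zero_mul, zero_add, Matrix.smul_mul, Matrix.smul_apply, smul_eq_mul, dvd_neg, hBA]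
      exact hdiag _ (hAB i)

theorem map_blocks_eq_of_mul_eq {q : ℤ} (hq : Odd q)
    {A' B' C' D' A B C₀ D : Matrix (Fin 2) (Fin 2) ℤ} {M' : Mat₄}
    (hM' : ∀ i j, 2 ∣ M' i j - (1 : Mat₄) i j)
    (h : fromBlocks A' B' C' D' * M' = fromBlocks A B (q • C₀) D) :
    A.map (Int.castRingHom (ZMod 2)) = A'.map (Int.castRingHom (ZMod 2)) ∧
    B.map (Int.castRingHom (ZMod 2)) = B'.map (Int.castRingHom (ZMod 2)) ∧
    C₀.map (Int.castRingHom (ZMod 2)) = C'.map (Int.castRingHom (ZMod 2)) ∧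
    D.map (Int.castRingHom (ZMod 2)) = D'.map (Int.castRingHom (ZMod 2)) := by
  obtain ⟨hA, hB, hC, hD⟩ := fromBlocks_inj.1 <| by
    simpa only [h, fromBlocks_map] using
      map_mul_eq_of_two_dvd_sub_one (M := fromBlocks A' B' C' D') hM'
  refine ⟨hA, hB, ?_, hD⟩
  ext i j
  simpa only [map_apply, Matrix.smul_apply, smul_eq_mul, eq_intCast, Int.cast_mul,
    hq.intCast_zmod_two, one_mul] using congrFun₂ hC i j

theorem gamma_p_same_class_general (p : ℕ) (hoddp : p % 2 = 1)
    (A' B' C' D' : Matrix (Fin 2) (Fin 2) ℤ)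
    (hM : IsSymplectic (Matrix.fromBlocks A' B' C' D'))
    (M' : Matrix (Fin 2 ⊕ Fin 2) (Fin 2 ⊕ Fin 2) ℤ) (hM' : InGamma24 M')
    (A B C D C₀ : Matrix (Fin 2) (Fin 2) ℤ)
    (hN : Matrix.fromBlocks A' B' C' D' * M' = Matrix.fromBlocks A B C D)
    (hC : C = (p : ℤ) • C₀) :
    IsSymplectic (Matrix.fromBlocks A ((p : ℤ) • B) C₀ D) ∧
    (p % 4 = 1 →
      ∃ K, InGamma24 K ∧
        Matrix.fromBlocks A ((p : ℤ) • B) C₀ D = K * Matrix.fromBlocks A' B' C' D') ∧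
    (p % 4 = 3 → (∀ i, (2 : ℤ) ∣ (A' * B'ᵀ) i i) → (∀ i, (2 : ℤ) ∣ (C' * D'ᵀ) i i) →
      ∃ K, InGamma24 K ∧
        Matrix.fromBlocks A ((p : ℤ) • B) C₀ D = K * Matrix.fromBlocks A' B' C' D') := by
  let m : Sp₄ℤ := ⟨_, isSymplectic_iff_mem_symplecticGroup.1 hM⟩
  let m' : Sp₄ℤ := ⟨M', isSymplectic_iff_mem_symplecticGroup.1 hM'.1⟩
  have hpodd : Odd (p : ℤ) := ⟨p / 2, by omega⟩
  have hn : ((m * m' : Sp₄ℤ) : Mat₄) = fromBlocks A B ((p : ℤ) • C₀) D := hC ▸ hN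
  have hNp : fromBlocks A ((p : ℤ) • B) C₀ D ∈ Sp₄ℤ :=
    SymplecticGroup.fromBlocks_smul₁₂_mem_of_smul₂₁_mem (by omega) (hn ▸ (m * m').2)
  let np : Sp₄ℤ := ⟨_, hNp⟩
  have same_class (hAB : ∀ i, 4 ∣ ((p : ℤ) - 1) * (A * Bᵀ) i i)
      (hCD : ∀ i, 4 ∣ ((p : ℤ) - 1) * (C₀ * Dᵀ) i i) :
      ∃ K, InGamma24 K ∧ fromBlocks A ((p : ℤ) • B) C₀ D = K * fromBlocks A' B' C' D' := by
    refine ⟨↑(np * m⁻¹), ?_, ?_⟩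
    · rw [show np * m⁻¹ = np * (m * m')⁻¹ * (m * m' * m⁻¹) by group]
      exact gamma24.mul_mem (rescale_mul_inv_mem_gamma24 hpodd hn rfl hAB hCD)
        (gamma24_normal.conj_mem m' hM' m)
    · rw [Submonoid.coe_mul, Matrix.mul_assoc, SymplecticGroup.coe_inv_mul_coe, Matrix.mul_one]
  refine ⟨isSymplectic_iff_mem_symplecticGroup.2 hNp,
    fun hp4 => same_class (fun i => dvd_mul_of_dvd_left (by omega) _)
      (fun i => dvd_mul_of_dvd_left (by omega) _), fun hp4 hAB' hCD' => ?_⟩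
  obtain ⟨hA, hB, hC₀, hD⟩ := map_blocks_eq_of_mul_eq hpodd hM'.2.1 (hC ▸ hN)
  have four_dvd {x : ℤ} (hx : 2 ∣ x) : 4 ∣ ((p : ℤ) - 1) * x := by
    simpa using mul_dvd_mul (show (2 : ℤ) ∣ p - 1 by omega) hx
  exact same_class (fun i => four_dvd ((two_dvd_mul_transpose_apply_iff hA hB i i).2 (hAB' i)))
    (fun i => four_dvd ((two_dvd_mul_transpose_apply_iff hC₀ hD i i).2 (hCD' i)))

/-- Let `p` be an odd prime, `M = [[A',B'],[C',D']] ∈ Sp₄(ℤ)`, `M' ∈ Γ(2,4)` with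
`N := M·M' = [[A,B],[C,D]] ∈ Γ₀(p)` and `C = p·C₀`. Then `N_p := [[A, pB],[C₀, D]]`
is symplectic; it lies in the same class as `M` modulo `Γ(2,4)` when `p ≡ 1 (mod 4)`,
and also when `p ≡ 3 (mod 4)` provided the diagonal entries of `A'·ᵗB'` and of
`C'·ᵗD'` are all even. -/
theorem gamma_p_same_class (p : ℕ) (hp : p.Prime) (hoddp : p % 2 = 1)
    (A' B' C' D' : Matrix (Fin 2) (Fin 2) ℤ)
    (hM : IsSymplectic (Matrix.fromBlocks A' B' C' D'))
    (M' : Matrix (Fin 2 ⊕ Fin 2) (Fin 2 ⊕ Fin 2) ℤ) (hM' : InGamma24 M')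
    (A B C D C₀ : Matrix (Fin 2) (Fin 2) ℤ)
    (hN : Matrix.fromBlocks A' B' C' D' * M' = Matrix.fromBlocks A B C D)
    (hN0 : InGamma0 p (Matrix.fromBlocks A B C D))
    (hC : C = (p : ℤ) • C₀) :
    IsSymplectic (Matrix.fromBlocks A ((p : ℤ) • B) C₀ D) ∧
    (p % 4 = 1 →
      ∃ K, InGamma24 K ∧
        Matrix.fromBlocks A ((p : ℤ) • B) C₀ D = K * Matrix.fromBlocks A' B' C' D') ∧
    (p % 4 = 3 → (∀ i, (2 : ℤ) ∣ (A' * B'ᵀ) i i) → (∀ i, (2 : ℤ) ∣ (C' * D'ᵀ) i i) →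
      ∃ K, InGamma24 K ∧
        Matrix.fromBlocks A ((p : ℤ) • B) C₀ D = K * Matrix.fromBlocks A' B' C' D') :=
  gamma_p_same_class_general p hoddp A' B' C' D' hM M' hM' A B C D C₀ hN hC
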